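/- arXiv:2409.19576 — 9 statements merged into one kernel-verified Lean document; each statement's English description precedes it below -/
import Mathlib

section
/- For any two distinct closed suffixes u and v of the same string T, the longest border of u and the longest border of v have different lengths. -/
variable {α : Type*} [DecidableEq α]

/-- Number of occurrences of `s` as a factor of `w` (starting positions, 0-indexed). -/
def countOcc (s w : List α) : ℕ :=
  ((Finset.range (w.length + 1)).filter (fun i => s <+: w.drop i)).card

/-- `b` is a border of `w`. -/
def IsBorder (b w : List α) : Prop := b ≠ w ∧ b <+: w ∧ b <:+ w

/-- The longest border of `w`. -/
def bord (w : List α) : List α :=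
  w.take (((Finset.range w.length).filter (fun k => w.take k <:+ w)).sup id)

/-- A string is closed if its length is one, or it has a nonempty border occurring
exactly twice in it. -/
def IsClosedStr (w : List α) : Prop :=
  w.length = 1 ∨ ∃ b : List α, b ≠ [] ∧ IsBorder b w ∧ countOcc b w = 2

/-- The longest repeating suffix of `w` (the empty string if none). -/
def lrs (w : List α) : List α :=
  w.drop (w.length -
    ((Finset.range (w.length + 1)).filter
      (fun k => 2 ≤ countOcc (w.drop (w.length - k)) w)).sup id)

/-- `u` is a factor (contiguous substring) of `w`. -/
def IsFactor (u w : List α) : Prop := ∃ s t : List α, w = s ++ u ++ t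

/-- The set of all factors of `w`. -/
def factors (w : List α) : Finset (List α) :=
  (Finset.range (w.length + 1) ×ˢ Finset.range (w.length + 1)).image
    (fun p => (w.drop p.1).take p.2)

/-- The set of distinct closed factors of `w`. -/
noncomputable def closedFactors (w : List α) : Finset (List α) :=
  @Finset.filter _ IsClosedStr (Classical.decPred _) (factors w)

/- Auxiliary lemmas -/

lemma aux_sup_id_mem {s : Finset ℕ} (h : s.Nonempty) : s.sup id ∈ s := by
  rw [← Finset.sup'_eq_sup h]
  exact s.max'_mem h

lemma aux_suffix_drop_eq {u v : List α} (h : u <:+ v) :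
    v.drop (v.length - u.length) = u := by
  obtain ⟨t, rfl⟩ := h
  simp

lemma aux_suffix_of_suffix_le {u v w : List α} (hu : u <:+ w) (hv : v <:+ w)
    (h : u.length ≤ v.length) : u <:+ v := by
  rw [← List.reverse_prefix] at hu hv ⊢
  exact List.prefix_of_prefix_length_le hu hv (by simpa using h)

lemma aux_suffix_eq_of_length {u v w : List α} (hu : u <:+ w) (hv : v <:+ w)
    (h : u.length = v.length) : u = v := by
  rw [← aux_suffix_drop_eq hu, ← aux_suffix_drop_eq hv, h]

lemma aux_border_length_lt {b w : List α} (hb : IsBorder b w) : b.length < w.length := by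
  obtain ⟨hne, hp, -⟩ := hb
  exact lt_of_le_of_ne hp.length_le (fun h => hne (hp.eq_of_length h))

lemma aux_bord_isBorder {w : List α} (hw : w ≠ []) : IsBorder (bord w) w := by
  set s := (Finset.range w.length).filter (fun k => w.take k <:+ w) with hs
  have hne : s.Nonempty := ⟨0, by
    simp [hs, List.nil_suffix, List.length_pos_iff.2 hw]⟩
  have hmem := aux_sup_id_mem hne
  rw [hs, Finset.mem_filter, Finset.mem_range] at hmem
  refine ⟨?_, List.take_prefix _ _, hmem.2⟩
  intro h
  have : (bord w).length = w.length := by rw [h]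
  rw [bord, List.length_take] at this
  omega

lemma aux_bord_length {w : List α} (hw : w ≠ []) :
    (bord w).length = ((Finset.range w.length).filter (fun k => w.take k <:+ w)).sup id := by
  have h := aux_border_length_lt (aux_bord_isBorder hw)
  rw [bord, List.length_take]
  rw [bord, List.length_take] at h
  omega

lemma aux_bord_max {b w : List α} (hb : IsBorder b w) : b.length ≤ (bord w).length := by
  have hw : w ≠ [] := by
    rintro rfl
    exact hb.1 (List.prefix_nil.mp hb.2.1)
  rw [aux_bord_length hw]
  have hlt : b.length < w.length := aux_border_length_lt hb
  have hmem : b.length ∈ (Finset.range w.length).filter (fun k => w.take k <:+ w) := by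
    rw [Finset.mem_filter, Finset.mem_range]
    refine ⟨hlt, ?_⟩
    rw [← List.prefix_iff_eq_take.mp hb.2.1]
    exact hb.2.2
  exact Finset.le_sup (f := id) hmem

lemma aux_countOcc_le_of_prefix {a b w : List α} (h : a <+: b) :
    countOcc b w ≤ countOcc a w := by
  apply Finset.card_le_card
  intro i hi
  rw [Finset.mem_filter] at hi ⊢
  exact ⟨hi.1, h.trans hi.2⟩

lemma aux_mem_occ {s w : List α} {i : ℕ} (h1 : i ≤ w.length) (h2 : s <+: w.drop i) :
    i ∈ (Finset.range (w.length + 1)).filter (fun i => s <+: w.drop i) := by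
  rw [Finset.mem_filter, Finset.mem_range]
  exact ⟨Nat.lt_succ_of_le h1, h2⟩

lemma aux_two_le_countOcc {b w : List α} (hb : IsBorder b w) : 2 ≤ countOcc b w := by
  have hlt : b.length < w.length := aux_border_length_lt hb
  have h0 : (0 : ℕ) ∈ (Finset.range (w.length + 1)).filter (fun i => b <+: w.drop i) :=
    aux_mem_occ (Nat.zero_le _) (by simpa using hb.2.1)
  have h1 : w.length - b.length ∈
      (Finset.range (w.length + 1)).filter (fun i => b <+: w.drop i) :=
    aux_mem_occ (Nat.sub_le _ _) (by rw [aux_suffix_drop_eq hb.2.2])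
  have hsub : ({0, w.length - b.length} : Finset ℕ) ⊆
      (Finset.range (w.length + 1)).filter (fun i => b <+: w.drop i) := by
    intro i hi
    simp only [Finset.mem_insert, Finset.mem_singleton] at hi
    rcases hi with rfl | rfl
    · exact h0
    · exact h1
  calc 2 = ({0, w.length - b.length} : Finset ℕ).card := by
            rw [Finset.card_pair]; omega
       _ ≤ _ := Finset.card_le_card hsub
  -- done
  
lemma aux_closed_ne_nil {w : List α} (h : IsClosedStr w) : w ≠ [] := by
  rcases h with h | ⟨b, hb, hbord, -⟩
  · intro hw; rw [hw] at h; simp at h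
  · rintro rfl
    exact hb (List.prefix_nil.mp hbord.2.1)

lemma aux_closed_countOcc_bord {w : List α} (h : IsClosedStr w) (h2 : 2 ≤ w.length) :
    countOcc (bord w) w = 2 ∧ bord w ≠ [] := by
  rcases h with h | ⟨b, hbne, hbord, hcnt⟩
  · omega
  have hw : w ≠ [] := by rintro rfl; simp at h2
  have hB := aux_bord_isBorder hw
  have hle : b.length ≤ (bord w).length := aux_bord_max hbord
  have hpre : b <+: bord w :=
    List.prefix_of_prefix_length_le hbord.2.1 hB.2.1 hle
  constructor
  · have := aux_countOcc_le_of_prefix hpre (w := w)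
    have := aux_two_le_countOcc hB
    omega
  · intro hnil
    rw [hnil, List.prefix_nil] at hpre
    exact hbne hpre

theorem stmt0 (T u v : List α)
    (hu : u <:+ T) (hv : v <:+ T) (hcu : IsClosedStr u) (hcv : IsClosedStr v)
    (hne : u ≠ v) :
    (bord u).length ≠ (bord v).length := by
  wlog hle : u.length ≤ v.length with H
  · exact (H T v u hv hu hcv hcu hne.symm (le_of_not_ge hle)).symm
  have hlt : u.length < v.length := by
    rcases lt_or_eq_of_le hle with h | h
    · exact h
    · exact absurd (aux_suffix_eq_of_length hu hv h) hne
  have hu0 : u ≠ [] := aux_closed_ne_nil hcu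
  have hu1 : 1 ≤ u.length := List.length_pos_iff.2 hu0
  have hv2 : 2 ≤ v.length := by omega
  have hvne : v ≠ [] := by rintro rfl; simp at hv2
  obtain ⟨hcntB, hBne⟩ := aux_closed_countOcc_bord hcv hv2
  have hB := aux_bord_isBorder hvne
  intro heq
  rcases Nat.lt_or_ge u.length 2 with h1 | h2
  · -- u.length = 1, so bord u = [], but bord v ≠ []
    have hbu : (bord u).length < u.length := aux_border_length_lt (aux_bord_isBorder hu0)
    have : (bord v).length ≠ 0 := fun h => hBne (List.length_eq_zero_iff.mp h)
    omega
  · -- main case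
    have huv : u <:+ v := aux_suffix_of_suffix_le hu hv hle
    have hbu := aux_bord_isBorder hu0
    have hk : (bord u).length < u.length := aux_border_length_lt hbu
    -- bord u = bord v
    have hbuv : bord u = bord v :=
      aux_suffix_eq_of_length (hbu.2.2.trans huv) hB.2.2 heq
    set B := bord v with hBdef
    set k := B.length with hkdef
    have hkv : k < v.length := aux_border_length_lt hB
    -- three occurrences of B in v
    have h0 : (0 : ℕ) ∈ (Finset.range (v.length + 1)).filter (fun i => B <+: v.drop i) :=
      aux_mem_occ (Nat.zero_le _) (by simpa using hB.2.1)
    have h1 : v.length - u.length ∈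
        (Finset.range (v.length + 1)).filter (fun i => B <+: v.drop i) := by
      refine aux_mem_occ (Nat.sub_le _ _) ?_
      rw [aux_suffix_drop_eq huv, ← hbuv]
      exact hbu.2.1
    have h2' : v.length - k ∈
        (Finset.range (v.length + 1)).filter (fun i => B <+: v.drop i) := by
      refine aux_mem_occ (Nat.sub_le _ _) ?_
      rw [hkdef, aux_suffix_drop_eq hB.2.2]
    have hk' : k < u.length := by rw [hkdef, ← hbuv]; exact hk
    have hsub : ({0, v.length - u.length, v.length - k} : Finset ℕ) ⊆
        (Finset.range (v.length + 1)).filter (fun i => B <+: v.drop i) := by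
      intro i hi
      simp only [Finset.mem_insert, Finset.mem_singleton] at hi
      rcases hi with rfl | rfl | rfl
      · exact h0
      · exact h1
      · exact h2'
    have hcard : ({0, v.length - u.length, v.length - k} : Finset ℕ).card = 3 := by
      rw [Finset.card_insert_of_notMem (by simp; omega), Finset.card_pair (by omega)]
    have h3 : 3 ≤ countOcc B v := by
      rw [countOcc, ← hcard]
      exact Finset.card_le_card hsub
    omega
end

section
/- Let T be a string of length n and let 1 ≤ j ≤ n. If the longest repeating suffix of T[1..j] is empty (i.e., every nonempty suffix of T[1..j] occurs only once in T[1..j]), then exactly one new distinct closed factor appears when extending T[1..j-1] to T[1..j]; that is, |C(T[1..j])| - |C(T[1..j-1])| = 1. -/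
/-!
Write `T[1..j] = v ++ [c]`. A factor of `v ++ [c]` that is not a factor of `v` is a suffix of
`v ++ [c]`. If such a suffix is closed and longer than one letter, its border occurring twice in
it is a nonempty suffix of `v ++ [c]` occurring at least twice, which `lrs (v ++ [c]) = []`
forbids. So the only candidate for a new closed factor is the letter `[c]`, and it is new
because it occurs only once in `v ++ [c]`.
-/

variable {α : Type*} [DecidableEq α]

lemma mem_factors_iff {u w : List α} : u ∈ factors w ↔ IsFactor u w := by
  simp only [factors, Finset.mem_image, Finset.mem_product, Finset.mem_range]
  constructor
  · rintro ⟨⟨i, k⟩, -, rfl⟩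
    exact ⟨w.take i, (w.drop i).drop k, by
      rw [List.append_assoc, List.take_append_drop, List.take_append_drop]⟩
  · rintro ⟨s, t, rfl⟩
    refine ⟨⟨s.length, u.length⟩, ⟨?_, ?_⟩, ?_⟩
    · simp
    · simp only [List.length_append]; omega
    · simp

lemma mem_closedFactors_iff {u w : List α} :
    u ∈ closedFactors w ↔ IsFactor u w ∧ IsClosedStr u := by
  simp only [closedFactors, Finset.mem_filter, mem_factors_iff]

lemma IsFactor.append_right {β : Type*} {u v : List β} (h : IsFactor u v) (t : List β) :
    IsFactor u (v ++ t) := by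
  obtain ⟨s, t', rfl⟩ := h
  exact ⟨s, t' ++ t, by simp⟩

lemma IsFactor.suffix_of_not_isFactor {β : Type*} {u v : List β} {c : β}
    (h : IsFactor u (v ++ [c])) (hv : ¬ IsFactor u v) : u <:+ v ++ [c] := by
  obtain ⟨s, t, hw⟩ := h
  rcases t.eq_nil_or_concat with rfl | ⟨t', x, rfl⟩
  · exact ⟨s, by simpa using hw.symm⟩
  · have hw' : v ++ [c] = (s ++ u ++ t') ++ [x] := by rw [hw]; simp
    exact absurd ⟨s, t', (List.append_inj' hw' rfl).1⟩ hv

lemma one_le_countOcc_of_suffix {s w : List α} (h : s <:+ w) : 1 ≤ countOcc s w :=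
  Finset.card_pos.mpr ⟨w.length - s.length, Finset.mem_filter.mpr
    ⟨Finset.mem_range.mpr (by omega), by rw [← List.suffix_iff_eq_drop.mp h]⟩⟩

lemma countOcc_le_of_suffix (b : List α) {u w : List α} (h : u <:+ w) :
    countOcc b u ≤ countOcc b w := by
  obtain ⟨s, rfl⟩ := h
  refine Finset.card_le_card_of_injOn (s.length + ·) (fun i hi => ?_)
    (fun _ _ _ _ => Nat.add_left_cancel)
  simp only [Finset.coe_filter, Finset.mem_range, Set.mem_ofPred_eq] at hi ⊢
  rw [List.drop_length_add_append]
  exact ⟨by simp only [List.length_append]; omega, hi.2⟩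

lemma two_le_countOcc_append {u v : List α} (hu : u ≠ []) (h : IsFactor u v) :
    2 ≤ countOcc u (v ++ u) := by
  obtain ⟨s, t, rfl⟩ := h
  have hlt : s.length < (s ++ u ++ t).length := by
    simp only [List.length_append]; have := List.length_pos_iff.mpr hu; omega
  have hpair : ({s.length, (s ++ u ++ t).length} : Finset ℕ) ⊆
      (Finset.range ((s ++ u ++ t ++ u).length + 1)).filter
        (fun i => u <+: (s ++ u ++ t ++ u).drop i) := by
    simp [Finset.insert_subset_iff]
  calc 2 = ({s.length, (s ++ u ++ t).length} : Finset ℕ).card :=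
        (Finset.card_pair hlt.ne).symm
    _ ≤ countOcc u (s ++ u ++ t ++ u) := Finset.card_le_card hpair

lemma countOcc_eq_one_of_lrs_eq_nil {w : List α} (h : lrs w = []) {s : List α} (hs : s ≠ [])
    (hsw : s <:+ w) : countOcc s w = 1 := by
  set K := ((Finset.range (w.length + 1)).filter
    (fun k => 2 ≤ countOcc (w.drop (w.length - k)) w)).sup id
  have hK : w.length ≤ w.length - K := List.drop_eq_nil_iff.mp h
  refine le_antisymm (not_lt.mp fun hs2 => ?_) (one_le_countOcc_of_suffix hsw)
  have hsw_len := hsw.length_le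
  have hmem : s.length ∈ (Finset.range (w.length + 1)).filter
      (fun k => 2 ≤ countOcc (w.drop (w.length - k)) w) := by
    refine Finset.mem_filter.mpr ⟨Finset.mem_range.mpr (by omega), ?_⟩
    rwa [← List.suffix_iff_eq_drop.mp hsw]
  have hsK : s.length ≤ K := Finset.le_sup (f := id) hmem
  have := List.length_pos_iff.mpr hs
  omega

lemma IsClosedStr.length_eq_one_of_suffix {u w : List α} (hu : IsClosedStr u) (h : lrs w = [])
    (huw : u <:+ w) : u.length = 1 := by
  rcases hu with hlen | ⟨b, hb, ⟨-, -, hbu⟩, hcount⟩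
  · exact hlen
  · have hw := countOcc_eq_one_of_lrs_eq_nil h hb (hbu.trans huw)
    have hle := countOcc_le_of_suffix b huw
    omega

lemma singleton_notMem_closedFactors {v : List α} {c : α} (h : lrs (v ++ [c]) = []) :
    [c] ∉ closedFactors v := by
  intro hc
  have htwo := two_le_countOcc_append (List.cons_ne_nil c []) (mem_closedFactors_iff.mp hc).1
  have hone := countOcc_eq_one_of_lrs_eq_nil h (List.cons_ne_nil c []) (List.suffix_append v [c])
  omega

lemma closedFactors_append_singleton {v : List α} {c : α} (h : lrs (v ++ [c]) = []) :
    closedFactors (v ++ [c]) = insert [c] (closedFactors v) := by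
  ext u
  simp only [Finset.mem_insert, mem_closedFactors_iff]
  constructor
  · rintro ⟨hf, hu⟩
    by_cases huv : IsFactor u v
    · exact Or.inr ⟨huv, hu⟩
    have husuf := hf.suffix_of_not_isFactor huv
    have hlen := hu.length_eq_one_of_suffix h husuf
    rw [List.suffix_iff_eq_drop, hlen] at husuf
    exact Or.inl (by simpa using husuf)
  · rintro (rfl | ⟨hf, hu⟩)
    · exact ⟨⟨v, [], by simp⟩, Or.inl rfl⟩
    · exact ⟨hf.append_right [c], hu⟩

theorem stmt3 (T : List α) (j : ℕ) (hj1 : 1 ≤ j) (hj2 : j ≤ T.length)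
    (hlrs : lrs (T.take j) = []) :
    (closedFactors (T.take j)).card = (closedFactors (T.take (j - 1))).card + 1 := by
  obtain ⟨i, rfl⟩ : ∃ i, j = i + 1 := ⟨j - 1, by omega⟩
  rw [List.take_succ_eq_append_getElem hj2] at hlrs ⊢
  rw [Nat.add_sub_cancel, closedFactors_append_singleton hlrs,
    Finset.card_insert_of_notMem (singleton_notMem_closedFactors hlrs)]
end

section
/- Let T be a string and 1 ≤ j ≤ |T| with lrs(T[1..j]) nonempty. Then the number of new distinct closed factors gained at step j satisfies |C(T[1..j])| - |C(T[1..j-1])| = |lrs(T[1..j])| - |lrs(lrs(T[1..j]))|. -/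
variable {α : Type*} [DecidableEq α]

/-!
A factor of `S` that is not a factor of `S.dropLast` is a suffix of `S` occurring only once, that
is, a suffix longer than `lrs S`. Such a suffix `w` is closed iff it has a border `u` occurring
exactly twice in `w`; then `u` is a repeating suffix of `S`, `w` starts at the last occurrence of
`u` before the final one, and `u` is determined by `w`. Conversely every nonempty repeating suffix
`u` of `S` gives such a `w`, and `w` is longer than `lrs S` exactly when `u` is longer than
`lrs (lrs S)`: otherwise `u` would occur twice inside `lrs S`. So the new closed factors are in
bijection with the lengths in `(|lrs (lrs S)|, |lrs S|]`.
-/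

def occurrences (u w : List α) : Finset ℕ :=
  (Finset.range (w.length + 1)).filter (fun i => u <+: w.drop i)

lemma countOcc_eq_card_occurrences (u w : List α) : countOcc u w = (occurrences u w).card := rfl

lemma mem_occurrences {u w : List α} {i : ℕ} :
    i ∈ occurrences u w ↔ i ≤ w.length ∧ u <+: w.drop i := by
  simp [occurrences]

lemma add_length_le_of_mem_occurrences {u w : List α} {i : ℕ} (h : i ∈ occurrences u w) :
    i + u.length ≤ w.length := by
  obtain ⟨hi, hu⟩ := mem_occurrences.mp h
  have := hu.length_le
  rw [List.length_drop] at this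
  omega

lemma zero_mem_occurrences {u w : List α} (h : u <+: w) : 0 ∈ occurrences u w :=
  mem_occurrences.mpr ⟨Nat.zero_le _, by simpa using h⟩

lemma sub_length_mem_occurrences {u w : List α} (h : u <:+ w) :
    w.length - u.length ∈ occurrences u w :=
  mem_occurrences.mpr ⟨Nat.sub_le _ _, by rw [← List.suffix_iff_eq_drop.mp h]⟩

lemma exists_mem_occurrences_add_length_lt {u w : List α} (h2 : 2 ≤ countOcc u w) :
    ∃ i ∈ occurrences u w, i + u.length < w.length := by
  obtain ⟨a, ha, b, hb, hab⟩ := Finset.one_lt_card.mp h2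
  have := add_length_le_of_mem_occurrences ha
  have := add_length_le_of_mem_occurrences hb
  rcases lt_or_gt_of_ne hab with h | h
  · exact ⟨a, ha, by omega⟩
  · exact ⟨b, hb, by omega⟩

lemma two_le_countOcc_of_isPrefix_of_isSuffix {c v : List α} (hp : c <+: v) (hs : c <:+ v)
    (hlt : c.length < v.length) : 2 ≤ countOcc c v :=
  Finset.one_lt_card.mpr
    ⟨0, zero_mem_occurrences hp, _, sub_length_mem_occurrences hs, by omega⟩

lemma countOcc_drop (u : List α) {S : List α} {d : ℕ} (hd : d ≤ S.length) :
    countOcc u (S.drop d) = ((occurrences u S).filter (d ≤ ·)).card := by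
  rw [countOcc_eq_card_occurrences]
  apply Finset.card_bij (fun t _ => d + t)
  · intro t ht
    rw [mem_occurrences, List.length_drop, List.drop_drop] at ht
    exact Finset.mem_filter.mpr ⟨mem_occurrences.mpr ⟨by omega, ht.2⟩, by omega⟩
  · intro a _ b _ h
    omega
  · intro i hi
    obtain ⟨hi, hdi⟩ := Finset.mem_filter.mp hi
    obtain ⟨hiS, hu⟩ := mem_occurrences.mp hi
    refine ⟨i - d, ?_, by omega⟩
    rw [mem_occurrences, List.length_drop, List.drop_drop, Nat.add_sub_cancel' hdi]
    exact ⟨by omega, hu⟩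

lemma countOcc_le_of_isSuffix_right {u w S : List α} (h : w <:+ S) :
    countOcc u w ≤ countOcc u S := by
  rw [List.suffix_iff_eq_drop.mp h, countOcc_drop u (Nat.sub_le _ _)]
  exact Finset.card_le_card (Finset.filter_subset _ _)

lemma countOcc_add_one_le {b v w : List α} (hb : b <+: w) (hv : v <:+ w)
    (hlt : v.length < w.length) : countOcc b v + 1 ≤ countOcc b w := by
  rw [List.suffix_iff_eq_drop.mp hv, countOcc_drop b (Nat.sub_le _ _)]
  exact Finset.card_lt_card
    (Finset.filter_ssubset.mpr ⟨0, zero_mem_occurrences hb, by omega⟩)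

lemma countOcc_le_of_isSuffix_left {u v w : List α} (h : u <:+ v) :
    countOcc v w ≤ countOcc u w := by
  rcases eq_or_ne v [] with rfl | hv
  · rw [List.suffix_nil.mp h]
  apply Finset.card_le_card_of_injOn (· + (v.length - u.length))
  · intro i hi
    obtain ⟨x, rfl⟩ := h
    have hend := add_length_le_of_mem_occurrences hi
    obtain ⟨hiw, r, hr⟩ := mem_occurrences.mp hi
    refine mem_occurrences.mpr ⟨by simp at hend ⊢; omega, r, ?_⟩
    rw [List.length_append, Nat.add_sub_cancel, ← List.drop_drop, ← hr, List.append_assoc,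
      List.drop_left]
  · intro a _ b _ h
    simpa using h

lemma isInfix_take_iff {u S : List α} {m : ℕ} :
    u <:+: S.take m ↔ ∃ i ∈ occurrences u S, i + u.length ≤ m := by
  constructor
  · rintro ⟨s, t, h⟩
    have hlen := congrArg List.length h
    simp only [List.length_append, List.length_take] at hlen
    have hdrop : S.drop s.length = u ++ (t ++ S.drop m) := by
      conv_lhs => rw [← List.take_append_drop m S, ← h]
      simp
    refine ⟨s.length, mem_occurrences.mpr ⟨by omega, ?_⟩, by omega⟩
    rw [hdrop]
    exact List.prefix_append u _
  · rintro ⟨i, hi, hend⟩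
    have hu := (mem_occurrences.mp hi).2
    have hpre : u <+: (S.drop i).take (m - i) := by
      rw [List.prefix_iff_eq_take.mp hu]
      exact List.take_isPrefix_take.mpr (Or.inl (by omega))
    rw [← List.drop_take] at hpre
    exact hpre.isInfix.trans (List.drop_suffix _ _).isInfix

lemma isInfix_iff_exists_mem_occurrences {u S : List α} :
    u <:+: S ↔ ∃ i, i ∈ occurrences u S := by
  conv_lhs => rw [← List.take_length (l := S)]
  rw [isInfix_take_iff]
  exact ⟨fun ⟨i, hi, _⟩ => ⟨i, hi⟩, fun ⟨i, hi⟩ => ⟨i, hi, add_length_le_of_mem_occurrences hi⟩⟩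

lemma isInfix_dropLast_iff {u S : List α} (hS : S ≠ []) :
    u <:+: S.dropLast ↔ ∃ i ∈ occurrences u S, i + u.length < S.length := by
  have := List.length_pos_iff.mpr hS
  rw [List.dropLast_eq_take, isInfix_take_iff]
  exact exists_congr fun i => and_congr_right fun _ => by omega

lemma mem_factors {u w : List α} : u ∈ factors w ↔ u <:+: w := by
  constructor
  · intro h
    obtain ⟨p, _, rfl⟩ := Finset.mem_image.mp h
    exact (List.take_prefix _ _).isInfix.trans (List.drop_suffix _ _).isInfix
  · rintro ⟨s, t, rfl⟩
    refine Finset.mem_image.mpr ⟨(s.length, u.length), ?_, ?_⟩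
    · simp only [Finset.mem_product, Finset.mem_range, List.length_append]
      omega
    · simp

lemma lrs_isSuffix (w : List α) : lrs w <:+ w := List.drop_suffix _ _

lemma lrs_nil : lrs ([] : List α) = [] := rfl

lemma length_le_length_lrs {u w : List α} (hu : u <:+ w) (h2 : 2 ≤ countOcc u w) :
    u.length ≤ (lrs w).length := by
  have hmem : u.length ∈ (Finset.range (w.length + 1)).filter
      (fun k => 2 ≤ countOcc (w.drop (w.length - k)) w) :=
    Finset.mem_filter.mpr ⟨Finset.mem_range.mpr (Nat.lt_succ_of_le hu.length_le),
      by rwa [← List.suffix_iff_eq_drop.mp hu]⟩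
  have : u.length ≤ _ := Finset.le_sup (f := id) hmem
  have := hu.length_le
  rw [lrs, List.length_drop]
  omega

lemma two_le_countOcc_lrs {w : List α} (hw : w ≠ []) : 2 ≤ countOcc (lrs w) w := by
  set s := (Finset.range (w.length + 1)).filter
    (fun k => 2 ≤ countOcc (w.drop (w.length - k)) w)
  have h0 : 0 ∈ s := by
    refine Finset.mem_filter.mpr ⟨by simp, ?_⟩
    rw [Nat.sub_zero, List.drop_length]
    exact two_le_countOcc_of_isPrefix_of_isSuffix List.nil_prefix List.nil_suffix
      (List.length_pos_iff.mpr hw)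
  obtain ⟨k, hk, hsup⟩ := Finset.exists_mem_eq_sup s ⟨0, h0⟩ id
  have hlrs : lrs w = w.drop (w.length - k) := by
    show w.drop (w.length - s.sup id) = _
    rw [hsup, id]
  rw [hlrs]
  exact (Finset.mem_filter.mp hk).2

lemma two_le_countOcc_iff {u w : List α} (hw : w ≠ []) (hu : u <:+ w) :
    2 ≤ countOcc u w ↔ u.length ≤ (lrs w).length :=
  ⟨length_le_length_lrs hu, fun h => (two_le_countOcc_lrs hw).trans
    (countOcc_le_of_isSuffix_left (List.suffix_of_suffix_length_le hu (lrs_isSuffix w) h))⟩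

lemma mem_factors_sdiff_dropLast_iff {S w : List α} (hS : S ≠ []) :
    w ∈ factors S ∧ w ∉ factors S.dropLast ↔ w <:+ S ∧ (lrs S).length < w.length := by
  rw [mem_factors, mem_factors, isInfix_dropLast_iff hS, isInfix_iff_exists_mem_occurrences]
  constructor
  · rintro ⟨⟨i, hi⟩, hlast⟩
    push Not at hlast
    have := hlast i hi
    have := add_length_le_of_mem_occurrences hi
    have hsuf : w <:+ S := by
      have hw := (mem_occurrences.mp hi).2
      rw [hw.eq_of_length (by simp; omega)]
      exact List.drop_suffix _ _
    refine ⟨hsuf, lt_of_not_ge fun hle => ?_⟩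
    obtain ⟨a, ha, hae⟩ :=
      exists_mem_occurrences_add_length_lt ((two_le_countOcc_iff hS hsuf).mpr hle)
    exact absurd (hlast a ha) (by omega)
  · rintro ⟨hsuf, hlen⟩
    refine ⟨⟨_, sub_length_mem_occurrences hsuf⟩, fun ⟨a, ha, hae⟩ => ?_⟩
    have h2 : 2 ≤ countOcc w S :=
      Finset.one_lt_card.mpr ⟨a, ha, _, sub_length_mem_occurrences hsuf, by omega⟩
    have := length_le_length_lrs hsuf h2
    omega

lemma mem_closedFactors_sdiff_dropLast_iff {S w : List α} (hS : S ≠ []) :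
    w ∈ closedFactors S \ closedFactors S.dropLast ↔
      w <:+ S ∧ (lrs S).length < w.length ∧ IsClosedStr w := by
  simp only [Finset.mem_sdiff, closedFactors, Finset.mem_filter]
  rw [← and_assoc, ← mem_factors_sdiff_dropLast_iff hS]
  tauto

lemma closedFactors_dropLast_subset (S : List α) : closedFactors S.dropLast ⊆ closedFactors S := by
  intro u hu
  simp only [closedFactors, Finset.mem_filter, mem_factors] at hu ⊢
  exact ⟨hu.1.trans (List.dropLast_prefix S).isInfix, hu.2⟩

omit [DecidableEq α] in
lemma IsBorder.length_lt {b w : List α} (h : IsBorder b w) : b.length < w.length :=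
  lt_of_le_of_ne h.2.1.length_le fun hl => h.1 (h.2.1.eq_of_length hl)

lemma IsBorder.eq_of_countOcc_eq_two {b b' w : List α} (hb : IsBorder b w)
    (h2 : countOcc b w = 2) (hb' : IsBorder b' w) (h2' : countOcc b' w = 2) : b = b' := by
  -- a shorter border `c` of `w` is a border of the longer one `c'`, which gives a third occurrence
  have not_shorter : ∀ c c' : List α, IsBorder c w → countOcc c w = 2 → IsBorder c' w →
      ¬ c.length < c'.length := by
    rintro c c' hc h2c hc' hlt
    have hcc' := two_le_countOcc_of_isPrefix_of_isSuffix
      (List.prefix_of_prefix_length_le hc.2.1 hc'.2.1 hlt.le)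
      (List.suffix_of_suffix_length_le hc.2.2 hc'.2.2 hlt.le) hlt
    have := countOcc_add_one_le hc.2.1 hc'.2.2 hc'.length_lt
    omega
  have hlen : b.length = b'.length := by
    have := not_shorter b b' hb h2 hb'
    have := not_shorter b' b hb' h2' hb
    omega
  exact (List.prefix_of_prefix_length_le hb.2.1 hb'.2.1 hlen.le).eq_of_length hlen

def prevOcc (u S : List α) : ℕ :=
  ((occurrences u S).filter (fun i => i + u.length < S.length)).sup id

lemma le_prevOcc {u S : List α} {i : ℕ} (hi : i ∈ occurrences u S)
    (hend : i + u.length < S.length) : i ≤ prevOcc u S :=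
  Finset.le_sup (f := id) (Finset.mem_filter.mpr ⟨hi, hend⟩)

lemma prevOcc_mem {u S : List α} (h2 : 2 ≤ countOcc u S) :
    prevOcc u S ∈ occurrences u S ∧ prevOcc u S + u.length < S.length := by
  obtain ⟨i, hi, hend⟩ := exists_mem_occurrences_add_length_lt h2
  obtain ⟨p, hp, hsup⟩ := Finset.exists_mem_eq_sup
    ((occurrences u S).filter (fun i => i + u.length < S.length))
    ⟨i, Finset.mem_filter.mpr ⟨hi, hend⟩⟩ id
  rw [prevOcc, hsup]
  exact Finset.mem_filter.mp hp

section prevOcc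

variable {u S : List α} (hu : u <:+ S) (h2 : 2 ≤ countOcc u S)
include hu h2

lemma countOcc_drop_prevOcc : countOcc u (S.drop (prevOcc u S)) = 2 := by
  obtain ⟨hp, hpend⟩ := prevOcc_mem h2
  have hfinal := sub_length_mem_occurrences hu
  rw [countOcc_drop u (mem_occurrences.mp hp).1, ← Finset.card_pair (by omega : prevOcc u S ≠ S.length - u.length)]
  congr 1
  ext i
  simp only [Finset.mem_filter, Finset.mem_insert, Finset.mem_singleton]
  constructor
  · rintro ⟨hi, hpi⟩
    have := add_length_le_of_mem_occurrences hi
    by_cases hend : i + u.length < S.length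
    · exact Or.inl (le_antisymm (le_prevOcc hi hend) hpi)
    · exact Or.inr (by omega)
  · rintro (rfl | rfl)
    · exact ⟨hp, le_rfl⟩
    · exact ⟨hfinal, by omega⟩

lemma isBorder_drop_prevOcc : IsBorder u (S.drop (prevOcc u S)) := by
  obtain ⟨hp, hpend⟩ := prevOcc_mem h2
  have hlen : u.length < (S.drop (prevOcc u S)).length := by
    rw [List.length_drop]
    omega
  exact ⟨fun h => hlen.ne (congrArg List.length h), (mem_occurrences.mp hp).2,
    List.suffix_of_suffix_length_le hu (List.drop_suffix _ _) hlen.le⟩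

lemma length_lrs_lt_length_drop_prevOcc (hlt : (lrs (lrs S)).length < u.length) :
    (lrs S).length < (S.drop (prevOcc u S)).length := by
  by_contra! hle
  have hw := List.suffix_of_suffix_length_le (List.drop_suffix _ _) (lrs_isSuffix S) hle
  have h2L : 2 ≤ countOcc u (lrs S) :=
    (countOcc_drop_prevOcc hu h2).symm.le.trans (countOcc_le_of_isSuffix_right hw)
  have := length_le_length_lrs ((isBorder_drop_prevOcc hu h2).2.2.trans hw) h2L
  omega

end prevOcc

lemma drop_prevOcc_eq_of_isBorder {b w S : List α} (hw : w <:+ S) (hb : IsBorder b w)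
    (h2 : countOcc b w = 2) : S.drop (prevOcc b S) = w := by
  have hbS : b <:+ S := hb.2.2.trans hw
  have h2S : 2 ≤ countOcc b S := h2 ▸ countOcc_le_of_isSuffix_right hw
  have hwS := hw.length_le
  have hbw := hb.length_lt
  have hstart : S.length - w.length ∈ occurrences b S :=
    mem_occurrences.mpr ⟨Nat.sub_le _ _, List.suffix_iff_eq_drop.mp hw ▸ hb.2.1⟩
  have hle := le_prevOcc hstart (by omega)
  have hp := (mem_occurrences.mp (prevOcc_mem h2S).1).1
  -- a later start would give `b` a third occurrence in `w`
  have hge : prevOcc b S ≤ S.length - w.length := by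
    by_contra! hlt
    have := countOcc_add_one_le hb.2.1
      (List.suffix_of_suffix_length_le (List.drop_suffix (prevOcc b S) S) hw (by simp; omega))
      (by simp; omega)
    rw [countOcc_drop_prevOcc hbS h2S] at this
    omega
  rw [le_antisymm hge hle, ← List.suffix_iff_eq_drop.mp hw]

lemma mem_Ioc_length_of_isBorder {b w S : List α} (hS : lrs S ≠ []) (hw : w <:+ S)
    (hwL : (lrs S).length < w.length) (hb : IsBorder b w) (h2 : countOcc b w = 2) :
    b.length ∈ Finset.Ioc (lrs (lrs S)).length (lrs S).length := by
  have hbS : b <:+ S := hb.2.2.trans hw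
  refine Finset.mem_Ioc.mpr ⟨lt_of_not_ge fun hle => ?_,
    length_le_length_lrs hbS (h2 ▸ countOcc_le_of_isSuffix_right hw)⟩
  have hL2 := (lrs_isSuffix (lrs S)).length_le
  have hbL := List.suffix_of_suffix_length_le hbS (lrs_isSuffix S) (by omega)
  have h2L := (two_le_countOcc_iff hS hbL).mpr hle
  have := countOcc_add_one_le hb.2.1
    (List.suffix_of_suffix_length_le (lrs_isSuffix S) hw hwL.le) hwL
  omega

lemma drop_prevOcc_mem_closedFactors_sdiff {u S : List α} (hu : u <:+ S) (hne : u ≠ [])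
    (h2 : 2 ≤ countOcc u S) (hlt : (lrs (lrs S)).length < u.length) :
    S.drop (prevOcc u S) ∈ closedFactors S \ closedFactors S.dropLast := by
  have hS : S ≠ [] := by rintro rfl; exact hne (List.suffix_nil.mp hu)
  exact (mem_closedFactors_sdiff_dropLast_iff hS).mpr
    ⟨List.drop_suffix _ _, length_lrs_lt_length_drop_prevOcc hu h2 hlt,
      Or.inr ⟨u, hne, isBorder_drop_prevOcc hu h2, countOcc_drop_prevOcc hu h2⟩⟩

theorem card_closedFactors_sdiff_dropLast {S : List α} (hS : lrs S ≠ []) :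
    (closedFactors S \ closedFactors S.dropLast).card =
      (lrs S).length - (lrs (lrs S)).length := by
  have hS' : S ≠ [] := by rintro rfl; exact hS lrs_nil
  have hLS := (lrs_isSuffix S).length_le
  have hsuffix : ∀ k ∈ Finset.Ioc (lrs (lrs S)).length (lrs S).length,
      (S.drop (S.length - k)).length = k ∧ 2 ≤ countOcc (S.drop (S.length - k)) S := by
    intro k hk
    have hlen : (S.drop (S.length - k)).length = k := by
      simp only [List.length_drop, Finset.mem_Ioc] at hk ⊢
      omega
    refine ⟨hlen, (two_le_countOcc_iff hS' (List.drop_suffix _ _)).mpr ?_⟩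
    rw [hlen]
    exact (Finset.mem_Ioc.mp hk).2
  rw [← Nat.card_Ioc]
  symm
  apply Finset.card_bij (fun k _ => S.drop (prevOcc (S.drop (S.length - k)) S))
  · intro k hk
    obtain ⟨hlen, h2⟩ := hsuffix k hk
    have hk1 := (Finset.mem_Ioc.mp hk).1
    exact drop_prevOcc_mem_closedFactors_sdiff (List.drop_suffix _ _)
      (List.ne_nil_of_length_pos (by omega)) h2 (by omega)
  · intro k hk k' hk' heq
    obtain ⟨hlen, h2⟩ := hsuffix k hk
    obtain ⟨hlen', h2'⟩ := hsuffix k' hk'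
    have hu := List.drop_suffix (S.length - k) S
    have hu' := List.drop_suffix (S.length - k') S
    have hb' := isBorder_drop_prevOcc hu' h2'
    have hc' := countOcc_drop_prevOcc hu' h2'
    rw [← heq] at hb' hc'
    rw [← hlen, ← hlen', (isBorder_drop_prevOcc hu h2).eq_of_countOcc_eq_two
      (countOcc_drop_prevOcc hu h2) hb' hc']
  · intro w hw
    obtain ⟨hsuf, hwL, hcl⟩ := (mem_closedFactors_sdiff_dropLast_iff hS').mp hw
    have hLpos := List.length_pos_iff.mpr hS
    obtain hw1 | ⟨b, -, hb, h2⟩ := hcl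
    · omega
    refine ⟨b.length, mem_Ioc_length_of_isBorder hS hsuf hwL hb h2, ?_⟩
    rw [← List.suffix_iff_eq_drop.mp (hb.2.2.trans hsuf)]
    exact drop_prevOcc_eq_of_isBorder hsuf hb h2

theorem stmt4_general (T : List α) (j : ℕ) (hj2 : j ≤ T.length)
    (hlrs : lrs (T.take j) ≠ []) :
    ((closedFactors (T.take j)).card : ℤ) - (closedFactors (T.take (j - 1))).card =
      ((lrs (T.take j)).length : ℤ) - (lrs (lrs (T.take j))).length := by
  have hprev : T.take (j - 1) = (T.take j).dropLast := by
    rw [List.dropLast_eq_take, List.take_take, List.length_take]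
    congr 1
    omega
  have hsub := closedFactors_dropLast_subset (T.take j)
  have hcard := card_closedFactors_sdiff_dropLast hlrs
  rw [Finset.card_sdiff_of_subset hsub] at hcard
  have := Finset.card_le_card hsub
  have := (lrs_isSuffix (lrs (T.take j))).length_le
  rw [hprev]
  omega

theorem stmt4 (T : List α) (j : ℕ) (hj1 : 1 ≤ j) (hj2 : j ≤ T.length)
    (hlrs : lrs (T.take j) ≠ []) :
    ((closedFactors (T.take j)).card : ℤ) - (closedFactors (T.take (j - 1))).card =
      ((lrs (T.take j)).length : ℤ) - (lrs (lrs (T.take j))).length :=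
  stmt4_general T j hj2 hlrs
end

section
/- Let T be a string, 1 ≤ j ≤ |T|, and suppose u is a closed factor of T[1..j] that is not a factor of T[1..j-1]. Then u is a suffix of T[1..j] that occurs exactly once in T[1..j], and the longest border of u occurs at least twice in T[1..j]. -/
variable {α : Type*} [DecidableEq α]

lemma isFactor_of_prefix_drop {u w : List α} {i : ℕ} (h : u <+: w.drop i) :
    IsFactor u w := by
  obtain ⟨r, hr⟩ := h
  exact ⟨w.take i, r, by rw [List.append_assoc, hr, List.take_append_drop]⟩

theorem stmt6 (T u : List α) (j : ℕ) (hj1 : 1 ≤ j) (hj2 : j ≤ T.length)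
    (hc : IsClosedStr u) (hfac : IsFactor u (T.take j))
    (hnew : ¬ IsFactor u (T.take (j - 1))) :
    u <:+ T.take j ∧ countOcc u (T.take j) = 1 ∧
      2 ≤ countOcc (bord u) (T.take j) := by
  set W := T.take j with hW
  have hWlen : W.length = j := by simp [hW, min_eq_left hj2]
  have hune : u ≠ [] := by
    intro h; exact hnew ⟨[], T.take (j-1), by simp [h]⟩
  have hulen : 0 < u.length := List.length_pos_iff.mpr hune
  -- every occurrence of u in W ends at j
  have hocc : ∀ i : ℕ, u <+: W.drop i → i + u.length = j := by
    intro i hi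
    have hle : u.length ≤ W.length - i := by
      have := hi.length_le; simpa using this
    rw [hWlen] at hle
    rcases Nat.lt_or_ge (i + u.length) j with hlt | hge
    · exfalso
      apply hnew
      apply isFactor_of_prefix_drop (w := T.take (j-1)) (i := i)
      have hi' := hi
      rw [hW, List.drop_take, List.prefix_take_iff] at hi'
      rw [List.drop_take, List.prefix_take_iff]
      exact ⟨hi'.1, by omega⟩
    · omega
  -- u is the suffix of W at position j - u.length
  obtain ⟨s, t, hst⟩ := hfac
  have hs : u <+: W.drop s.length := by
    rw [hst, List.append_assoc, List.drop_left]
    exact ⟨t, rfl⟩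
  have hslen : s.length + u.length = j := hocc _ hs
  have hdropu : W.drop s.length = u := by
    have hlen : (W.drop s.length).length = u.length := by
      simp [hWlen]; omega
    have h := List.prefix_iff_eq_take.mp hs
    exact (h.trans (by rw [← hlen, List.take_length])).symm
  have hsuf : u <:+ W := hdropu ▸ List.drop_suffix s.length W
  refine ⟨hsuf, ?_, ?_⟩
  · -- countOcc u W = 1
    unfold countOcc
    have : (Finset.range (W.length + 1)).filter (fun i => u <+: W.drop i)
        = {s.length} := by
      ext i
      simp only [Finset.mem_filter, Finset.mem_range, Finset.mem_singleton]
      constructor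
      · rintro ⟨_, hi⟩
        have := hocc i hi
        omega
      · rintro rfl
        exact ⟨by omega, hdropu ▸ List.prefix_refl u⟩
    rw [this, Finset.card_singleton]
  · -- bord u occurs at least twice
    set S := (Finset.range u.length).filter (fun k => u.take k <:+ u) with hS
    have hSne : S.Nonempty := ⟨0, by simp [hS, hulen]⟩
    obtain ⟨K, hKmem, hKsup⟩ := Finset.exists_mem_eq_sup S hSne id
    simp only [hS, Finset.mem_filter, Finset.mem_range] at hKmem
    obtain ⟨hKlt, hKsuf⟩ := hKmem
    have hbord : bord u = u.take K := by rw [bord, hKsup]; rfl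
    have hbordlen : (u.take K).length = K := by simp; omega
    -- occurrence 1: at s.length (prefix of u)
    have h1 : bord u <+: W.drop s.length := by
      rw [hdropu, hbord]; exact List.take_prefix K u
    -- occurrence 2: at j - K (suffix of u = suffix of W)
    obtain ⟨r, hr⟩ := hKsuf
    have hrlen : r.length = u.length - K := by
      have := congrArg List.length hr; simp [hbordlen] at this; omega
    have h2eq : W.drop (j - K) = bord u := by
      have : j - K = s.length + r.length := by omega
      rw [hbord, this, ← List.drop_drop, hdropu]
      conv_lhs => rw [← hr]
      rw [List.drop_left]
    have h2 : bord u <+: W.drop (j - K) := by rw [h2eq]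
    unfold countOcc
    have hsub : ({s.length, j - K} : Finset ℕ) ⊆
        (Finset.range (W.length + 1)).filter (fun i => bord u <+: W.drop i) := by
      intro i hi
      simp only [Finset.mem_insert, Finset.mem_singleton] at hi
      rcases hi with rfl | rfl
      · exact Finset.mem_filter.mpr ⟨Finset.mem_range.mpr (by omega), h1⟩
      · exact Finset.mem_filter.mpr ⟨Finset.mem_range.mpr (by omega), h2⟩
    have hcard : ({s.length, j - K} : Finset ℕ).card = 2 := by
      rw [Finset.card_insert_of_notMem (by simp; omega), Finset.card_singleton]
    calc 2 = ({s.length, j - K} : Finset ℕ).card := hcard.symm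
      _ ≤ _ := Finset.card_le_card hsub
end

section
/- For a string T of length n ≥ 1, if u is a closed suffix of T[1..j] that does not occur in T[1..j-1] and lrs(T[1..j]) ≠ ε, then |u| > |lrs(T[1..j])| and |bord(u)| ≤ |lrs(T[1..j])|. -/
variable {α : Type*} [DecidableEq α]

set_option linter.unusedSectionVars false

lemma suffix_eq_drop {u w : List α} (h : u <:+ w) :
    w.drop (w.length - u.length) = u := by
  obtain ⟨t, rfl⟩ := h
  simp

lemma two_le_countOcc {s w : List α} {i1 i2 : ℕ} (h : i1 ≠ i2)
    (h1 : i1 ≤ w.length) (h2 : i2 ≤ w.length)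
    (p1 : s <+: w.drop i1) (p2 : s <+: w.drop i2) : 2 ≤ countOcc s w := by
  apply Finset.one_lt_card.2
  refine ⟨i1, ?_, i2, ?_, h⟩ <;> simp [Finset.mem_filter, Nat.lt_succ, *]

lemma lrsK_le {w : List α} :
    ((Finset.range (w.length + 1)).filter
      (fun k => 2 ≤ countOcc (w.drop (w.length - k)) w)).sup id ≤ w.length := by
  apply Finset.sup_le
  intro b hb
  simp only [Finset.mem_filter, Finset.mem_range] at hb
  simpa using Nat.lt_succ_iff.mp hb.1

lemma lrs_length (w : List α) :
    (lrs w).length = ((Finset.range (w.length + 1)).filter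
      (fun k => 2 ≤ countOcc (w.drop (w.length - k)) w)).sup id := by
  have := lrsK_le (w := w)
  simp [lrs]; omega

lemma le_lrs_length {w u : List α} (hu : u <:+ w) (h2 : 2 ≤ countOcc u w) :
    u.length ≤ (lrs w).length := by
  rw [lrs_length]
  apply Finset.le_sup (f := id)
  simp only [Finset.mem_filter, Finset.mem_range, Nat.lt_succ]
  exact ⟨hu.length_le, by rwa [suffix_eq_drop hu]⟩

lemma countOcc_lrs {w : List α} (hw : lrs w ≠ []) : 2 ≤ countOcc (lrs w) w := by
  set S := (Finset.range (w.length + 1)).filter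
      (fun k => 2 ≤ countOcc (w.drop (w.length - k)) w) with hS
  have hne : S.Nonempty := by
    rcases Finset.eq_empty_or_nonempty S with he | h
    · exfalso; apply hw; rw [lrs, ← hS, he]; simp
    · exact h
  obtain ⟨k, hk, hke⟩ := Finset.exists_mem_eq_sup S hne id
  rw [hS, Finset.mem_filter] at hk
  rw [lrs, ← hS, hke]
  exact hk.2

theorem stmt8 (T u : List α) (n j : ℕ) (hn : n = T.length) (hn1 : 1 ≤ n)
    (hj1 : 1 ≤ j) (hj2 : j ≤ n)
    (hu : u <:+ T.take j) (hc : IsClosedStr u)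
    (hnew : ¬ IsFactor u (T.take (j - 1)))
    (hlrs : lrs (T.take j) ≠ []) :
    (lrs (T.take j)).length < u.length ∧
      (bord u).length ≤ (lrs (T.take j)).length := by
  set W := T.take j with hW
  have hWlen : W.length = j := by
    rw [hW, List.length_take]; omega
  set L := lrs W with hL
  have hLsuf : L <:+ W := List.drop_suffix _ _
  have hL2 : 2 ≤ countOcc L W := countOcc_lrs hlrs
  have hLpos : 1 ≤ L.length := List.length_pos_iff.2 hlrs
  have huj : u.length ≤ j := hWlen ▸ hu.length_le
  have claim1 : L.length < u.length := by
    by_contra hcon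
    push_neg at hcon
    apply hnew
    have husufL : u <:+ L := List.suffix_of_suffix_length_le hu hLsuf hcon
    rw [countOcc] at hL2
    obtain ⟨a, ha, b, hb, hab⟩ := Finset.one_lt_card.1 hL2
    simp only [Finset.mem_filter, Finset.mem_range, Nat.lt_succ] at ha hb
    have key : ∃ i, i + L.length < W.length ∧ L <+: W.drop i := by
      have la := ha.2.length_le; have lb := hb.2.length_le
      rw [List.length_drop] at la lb
      rcases Nat.lt_or_ge a b with h | h
      · exact ⟨a, by omega, ha.2⟩
      · have : b < a := by omega
        exact ⟨b, by omega, hb.2⟩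
    obtain ⟨i, hi, hpre⟩ := key
    obtain ⟨pre, hpreu⟩ := husufL
    obtain ⟨t, ht⟩ := hpre
    set m := i + pre.length with hm
    have hmu : m + u.length ≤ j - 1 := by
      have : pre.length + u.length = L.length := by
        rw [← hpreu]; simp
      omega
    have hdropm : u <+: W.drop m := by
      have : W.drop m = u ++ t := by
        rw [hm, ← List.drop_drop, ← ht, ← hpreu, List.append_assoc, List.drop_left]
      rw [this]; exact List.prefix_append u t
    -- move to T.take (j-1)
    have h1 : u <+: T.drop m := by
      have : W.drop m <+: T.drop m := by
        rw [hW, List.drop_take]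
        exact List.take_prefix _ _
      exact hdropm.trans this
    have h2 : u <+: (T.take (j - 1)).drop m := by
      rw [List.drop_take]
      rw [List.prefix_take_iff]
      exact ⟨h1, by omega⟩
    obtain ⟨t2, ht2⟩ := h2
    exact ⟨(T.take (j - 1)).take m, t2, by
      conv_lhs => rw [← List.take_append_drop m (T.take (j - 1)), ← ht2]
      simp⟩
  refine ⟨claim1, ?_⟩
  -- claim 2
  have hupos : 0 < u.length := by omega
  set S' := (Finset.range u.length).filter (fun k => u.take k <:+ u) with hS'
  have hne : S'.Nonempty := ⟨0, by simp [hS', hupos]⟩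
  obtain ⟨k, hk, hke⟩ := Finset.exists_mem_eq_sup S' hne id
  rw [hS', Finset.mem_filter, Finset.mem_range] at hk
  have hbord : bord u = u.take k := by rw [bord, ← hS', hke]; rfl
  have hblen : (bord u).length = k := by
    rw [hbord, List.length_take]; omega
  rw [hblen]
  have hbsufW : u.take k <:+ W := hk.2.trans hu
  have hblen2 : (u.take k).length = k := by rw [List.length_take]; omega
  have hocc : 2 ≤ countOcc (u.take k) W := by
    apply two_le_countOcc (i1 := j - u.length) (i2 := j - k)
    · omega
    · omega
    · omega
    · have : W.drop (j - u.length) = u := by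
        have := suffix_eq_drop hu
        rwa [hWlen] at this
      rw [this]; exact List.take_prefix _ _
    · have : W.drop (j - k) = u.take k := by
        have := suffix_eq_drop hbsufW
        rwa [hWlen, hblen2] at this
      rw [this]
  have := le_lrs_length hbsufW hocc
  rwa [hblen2] at this
end

section
/- For any string T and any index j with 2 ≤ j ≤ |T|, the starting position of lrs(T[1..j]) as a suffix of T[1..j] (i.e., j − |lrs(T[1..j])| + 1) is greater than or equal to the starting position of lrs(T[1..j-1]) as a suffix of T[1..j-1] (i.e., (j−1) − |lrs(T[1..j-1])| + 1). Equivalently, |lrs(T[1..j])| ≤ |lrs(T[1..j-1])| + 1. -/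
variable {α : Type*} [DecidableEq α]

theorem stmt12 (T : List α) (j : ℕ) (hj1 : 2 ≤ j) (hj2 : j ≤ T.length) :
    (lrs (T.take j)).length ≤ (lrs (T.take (j - 1))).length + 1 := by
  set w := T.take j with hwdef
  set w' := T.take (j-1) with hw'def
  have hwl : w.length = j := by simp [hwdef]; omega
  have hw'l : w'.length = j - 1 := by simp [hw'def]; omega
  have hw' : w' = w.take (j-1) := by
    rw [hwdef, hw'def, List.take_take]
    congr 1; omega
  set K := ((Finset.range (w.length + 1)).filter
      (fun k => 2 ≤ countOcc (w.drop (w.length - k)) w)).sup id with hK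
  set K' := ((Finset.range (w'.length + 1)).filter
      (fun k => 2 ≤ countOcc (w'.drop (w'.length - k)) w')).sup id with hK'
  have hKle : K ≤ w.length := Finset.sup_le (fun k hk => by
    simp only [Finset.mem_filter, Finset.mem_range] at hk
    simp only [id_eq]; omega)
  have hK'le : K' ≤ w'.length := Finset.sup_le (fun k hk => by
    simp only [Finset.mem_filter, Finset.mem_range] at hk
    simp only [id_eq]; omega)
  have hlen : (lrs w).length = K := by
    rw [lrs, List.length_drop]; omega
  have hlen' : (lrs w').length = K' := by
    rw [lrs, List.length_drop]; omega
  rw [hlen, hlen']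
  apply Finset.sup_le
  intro k hk
  simp only [id_eq]
  simp only [Finset.mem_filter, Finset.mem_range] at hk
  obtain ⟨hkr, hkc⟩ := hk
  rcases Nat.eq_zero_or_pos k with hk0 | hk1
  · simp [hk0]
  -- k ≥ 1 : show k - 1 ∈ the filter set for w'
  have hkj : k ≤ j := by omega
  set s := w.drop (w.length - k) with hs
  have hslen : s.length = k := by simp [hs, hwl]; omega
  -- the truncated suffix
  have hs' : w'.drop (w'.length - (k-1)) = s.take (k-1) := by
    rw [hw'l, hs, hwl]
    have : (j - 1) - (k - 1) = j - k := by omega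
    rw [this, hw', List.drop_take]
    congr 1; omega
  have hmem : k - 1 ∈ (Finset.range (w'.length + 1)).filter
      (fun m => 2 ≤ countOcc (w'.drop (w'.length - m)) w') := by
    simp only [Finset.mem_filter, Finset.mem_range]
    constructor
    · omega
    · rw [hs']
      refine le_trans hkc (Finset.card_le_card ?_)
      intro i hi
      simp only [Finset.mem_filter, Finset.mem_range] at hi ⊢
      obtain ⟨hir, hip⟩ := hi
      have hij : i ≤ j - k := by
        have h := hip.length_le
        rw [hslen, List.length_drop, hwl] at h
        omega
      constructor
      · omega
      · rw [hw', List.drop_take, List.prefix_take_iff]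
        constructor
        · exact (List.take_prefix (k-1) s).trans hip
        · rw [List.length_take, hslen]; omega
  have := Finset.le_sup (f := id) hmem
  simp only [id_eq] at this
  omega
end

section
/- For every nonempty suffix b of a string S such that b occurs at least twice in S (i.e., b is a repeating factor of S), there is exactly one closed suffix u of S with bord(u) = b, where bord(u) denotes the longest border of u. -/
variable {α : Type*} [DecidableEq α]

/-! ### Auxiliary definitions and lemmas -/

/-- The set of occurrence positions of `s` in `w`. -/
def occs (s w : List α) : Finset ℕ :=
  (Finset.range (w.length + 1)).filter (fun i => s <+: w.drop i)

lemma countOcc_eq_card (s w : List α) : countOcc s w = (occs s w).card := rfl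

lemma mem_occs {s w : List α} {i : ℕ} :
    i ∈ occs s w ↔ i ≤ w.length ∧ s <+: w.drop i := by
  simp [occs, Nat.lt_succ_iff]

lemma occs_add_le {s w : List α} {i : ℕ} (h : i ∈ occs s w) :
    i + s.length ≤ w.length := by
  obtain ⟨h1, h2⟩ := mem_occs.1 h
  have := h2.length_le
  simp only [List.length_drop] at this
  omega

lemma drop_of_suffix {s w : List α} (h : s <:+ w) :
    w.drop (w.length - s.length) = s := (List.suffix_iff_eq_drop.1 h).symm

lemma suffix_mem_occs {s w : List α} (h : s <:+ w) :
    w.length - s.length ∈ occs s w :=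
  mem_occs.2 ⟨Nat.sub_le _ _, by rw [drop_of_suffix h]⟩

lemma occs_drop {s w : List α} {p i : ℕ} (hp : p ≤ w.length) :
    i ∈ occs s (w.drop p) ↔ p + i ∈ occs s w := by
  rw [mem_occs, mem_occs, List.drop_drop, List.length_drop]
  constructor <;> rintro ⟨h1, h2⟩ <;> exact ⟨by omega, h2⟩

lemma occ_of_suffix_occ {c b w : List α} (hcb : c <:+ b) {i : ℕ}
    (h : i ∈ occs b w) : i + (b.length - c.length) ∈ occs c w := by
  obtain ⟨d, rfl⟩ := hcb
  obtain ⟨hi, hpre⟩ := mem_occs.1 h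
  obtain ⟨r, hr⟩ := hpre
  have hlen := occs_add_le h
  simp only [List.length_append] at hlen ⊢
  have hdc : d.length + c.length - c.length = d.length := by omega
  rw [hdc]
  refine mem_occs.2 ⟨by omega, ?_⟩
  have h2 : w.drop (i + d.length) = (w.drop i).drop d.length := by
    rw [List.drop_drop]
  rw [h2, ← hr, List.append_assoc, List.drop_left]
  exact ⟨r, rfl⟩

lemma suffix_of_suffix_le {a c w : List α} (ha : a <:+ w) (hc : c <:+ w)
    (h : a.length ≤ c.length) : a <:+ c := by
  have hcw := hc.length_le
  obtain ⟨t, rfl⟩ := hc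
  have h2 : (t ++ c).length - a.length = t.length + (c.length - a.length) := by
    simp only [List.length_append]
    omega
  have h3 : a = (t ++ c).drop (t.length + (c.length - a.length)) := by
    rw [← h2]
    exact List.suffix_iff_eq_drop.1 ha
  rw [List.drop_append] at h3
  rw [h3]
  have h4 : t.drop (t.length + (c.length - a.length)) = [] := List.drop_eq_nil_of_le (by omega)
  rw [h4, List.nil_append]
  exact List.drop_suffix _ _

/-- The set of border lengths. -/
def bordSet (w : List α) : Finset ℕ :=
  (Finset.range w.length).filter (fun k => w.take k <:+ w)

lemma mem_bordSet {w : List α} {k : ℕ} :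
    k ∈ bordSet w ↔ k < w.length ∧ w.take k <:+ w := by
  simp [bordSet]

lemma bord_eq_take (w : List α) : bord w = w.take ((bordSet w).sup id) := rfl

lemma bordSet_nonempty {w : List α} (hw : w ≠ []) : (bordSet w).Nonempty := by
  refine ⟨0, mem_bordSet.2 ⟨?_, by simp⟩⟩
  cases w with
  | nil => exact absurd rfl hw
  | cons a l => simp

lemma sup_mem_bordSet {w : List α} (hw : w ≠ []) :
    (bordSet w).sup id ∈ bordSet w := by
  have h := bordSet_nonempty hw
  rw [← Finset.sup'_eq_sup h id]
  exact Finset.max'_mem _ h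

lemma bord_eq_of {u b : List α} (hpre : b <+: u) (hsuf : b <:+ u)
    (hlt : b.length < u.length)
    (hmax : ∀ k, k ∈ bordSet u → k ≤ b.length) : bord u = b := by
  have hbmem : b.length ∈ bordSet u := by
    refine mem_bordSet.2 ⟨hlt, ?_⟩
    rwa [← List.prefix_iff_eq_take.1 hpre]
  have hle : (bordSet u).sup id ≤ b.length := Finset.sup_le hmax
  have hge : b.length ≤ (bordSet u).sup id := Finset.le_sup (f := id) hbmem
  have : (bordSet u).sup id = b.length := le_antisymm hle hge
  rw [bord_eq_take, this, ← List.prefix_iff_eq_take.1 hpre]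

lemma bord_spec {w : List α} (hw : w ≠ []) :
    (bord w) <+: w ∧ (bord w) <:+ w ∧ (bord w).length < w.length ∧
      ∀ c, IsBorder c w → c.length ≤ (bord w).length := by
  set K := (bordSet w).sup id with hK
  have hKmem := sup_mem_bordSet hw
  obtain ⟨hKlt, hKsuf⟩ := mem_bordSet.1 hKmem
  have hlen : (bord w).length = K := by
    rw [bord_eq_take, List.length_take]; omega
  refine ⟨List.take_prefix _ _, hKsuf, by omega, ?_⟩
  rintro c ⟨hne, hcpre, hcsuf⟩
  have hclen : c.length < w.length := by
    rcases lt_or_eq_of_le hcpre.length_le with h | h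
    · exact h
    · exact absurd (hcpre.eq_of_length h) hne
  have hcmem : c.length ∈ bordSet w := by
    refine mem_bordSet.2 ⟨hclen, ?_⟩
    rwa [← List.prefix_iff_eq_take.1 hcpre]
  have := Finset.le_sup (f := id) hcmem
  simp only [id_eq] at this
  omega

lemma prefix_mem_occs {s w : List α} (h : s <+: w) : 0 ∈ occs s w :=
  mem_occs.2 ⟨Nat.zero_le _, by simpa using h⟩

theorem stmt13 (S b : List α) (hb : b ≠ []) (hsuf : b <:+ S)
    (hrep : 2 ≤ countOcc b S) :
    ∃! u : List α, u <:+ S ∧ IsClosedStr u ∧ bord u = b := by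
  have hbS : b.length ≤ S.length := hsuf.length_le
  have hb0 : 0 < b.length := List.length_pos_iff.2 hb
  set q := S.length - b.length with hq
  have hqS : q ∈ occs b S := suffix_mem_occs hsuf
  have hqmax : ∀ i ∈ occs b S, i ≤ q := by
    intro i hi
    have := occs_add_le hi
    omega
  -- erase q still nonempty
  have hcard : 2 ≤ (occs b S).card := hrep
  have hne : ((occs b S).erase q).Nonempty := by
    rw [← Finset.card_pos, Finset.card_erase_of_mem hqS]
    omega
  set p := ((occs b S).erase q).max' hne with hp
  have hpmem : p ∈ (occs b S).erase q := Finset.max'_mem _ hne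
  have hpq : p ≠ q := (Finset.mem_erase.1 hpmem).1
  have hpS : p ∈ occs b S := (Finset.mem_erase.1 hpmem).2
  have hplt : p < q := lt_of_le_of_ne (hqmax p hpS) hpq
  have hpmax : ∀ j ∈ (occs b S).erase q, j ≤ p := fun j hj => Finset.le_max' _ j hj
  set u := S.drop p with hu
  have hpSlen : p ≤ S.length := by omega
  have hulen : u.length = S.length - p := List.length_drop
  have hblt : b.length < u.length := by omega
  -- b is a prefix of u
  have hupre : b <+: u := (mem_occs.1 hpS).2
  -- b is a suffix of u
  have husuf : b <:+ u := suffix_of_suffix_le hsuf (List.drop_suffix _ _) (by omega)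
  -- occurrences of b in u
  have hocc : occs b u = {0, q - p} := by
    ext i
    rw [hu, occs_drop hpSlen, Finset.mem_insert, Finset.mem_singleton]
    constructor
    · intro hi
      rcases eq_or_ne (p + i) q with h | h
      · right; omega
      · left
        have : p + i ∈ (occs b S).erase q := Finset.mem_erase.2 ⟨h, hi⟩
        have := hpmax _ this
        omega
    · rintro (rfl | rfl)
      · simpa using hpS
      · have : p + (q - p) = q := by omega
        rw [this]; exact hqS
  have hcount : countOcc b u = 2 := by
    rw [countOcc_eq_card, hocc, Finset.card_pair (by omega)]
  -- bord u = b
  have hmax : ∀ k, k ∈ bordSet u → k ≤ b.length := by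
    intro k hk
    by_contra hgt
    push_neg at hgt
    obtain ⟨hklt, hksuf⟩ := mem_bordSet.1 hk
    set c := u.take k with hc
    have hclen : c.length = k := by rw [hc, List.length_take]; omega
    have hbc : b <:+ c := suffix_of_suffix_le husuf hksuf (by omega)
    have h0 : 0 ∈ occs c u := prefix_mem_occs (List.take_prefix _ _)
    have := occ_of_suffix_occ hbc h0
    rw [hocc] at this
    simp only [Finset.mem_insert, Finset.mem_singleton, zero_add] at this
    rcases this with h | h
    · omega
    · omega
  have hbord : bord u = b := bord_eq_of hupre husuf hblt hmax
  have hclosed : IsClosedStr u :=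
    Or.inr ⟨b, hb, ⟨fun h => by rw [h] at hblt; omega, hupre, husuf⟩, hcount⟩
  refine ⟨u, ⟨List.drop_suffix _ _, hclosed, hbord⟩, ?_⟩
  -- uniqueness
  rintro u' ⟨hs', hc', hb'⟩
  have hu'ne : u' ≠ [] := by
    intro h
    rw [h] at hb'
    simp [bord] at hb'
    exact hb hb'
  obtain ⟨hpre', hsuf', hlt', hmax'⟩ := bord_spec hu'ne
  rw [hb'] at hpre' hsuf' hlt' hmax'
  -- u' can't have length 1
  rcases hc' with h1 | ⟨c, hc0, hcbord, hc2⟩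
  · omega
  -- occurrences of c in u' are exactly {0, |u'| - |c|}
  have hcu := hmax' c hcbord
  obtain ⟨hcneq, hcpre, hcsuf⟩ := hcbord
  have hclt : c.length < u'.length := by
    rcases lt_or_eq_of_le hcpre.length_le with h | h
    · exact h
    · exact absurd (hcpre.eq_of_length h) hcneq
  have hcocc : occs c u' = {0, u'.length - c.length} := by
    refine (Finset.eq_of_subset_of_card_le ?_ ?_).symm
    · intro i hi
      simp only [Finset.mem_insert, Finset.mem_singleton] at hi
      rcases hi with rfl | rfl
      · exact prefix_mem_occs hcpre
      · exact suffix_mem_occs hcsuf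
    · rw [← countOcc_eq_card, hc2, Finset.card_pair (by omega)]
  -- occurrences of b in u' are exactly {0, |u'| - |b|}
  have hcb : c <:+ b := suffix_of_suffix_le hcsuf hsuf' hcu
  have hbocc : ∀ i ∈ occs b u', i = 0 ∨ i = u'.length - b.length := by
    intro i hi
    have hi2 := occs_add_le hi
    have := occ_of_suffix_occ hcb hi
    rw [hcocc] at this
    simp only [Finset.mem_insert, Finset.mem_singleton] at this
    rcases this with h | h
    · left; omega
    · right; omega
  -- u' = S.drop p' with p' = |S| - |u'|
  have hu'S : u'.length ≤ S.length := hs'.length_le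
  set p' := S.length - u'.length with hp'
  have hu'drop : u' = S.drop p' := by rw [hp', drop_of_suffix hs']
  have hp'occ : p' ∈ occs b S := by
    refine mem_occs.2 ⟨by omega, ?_⟩
    rw [← hu'drop]; exact hpre'
  have hp'q : p' ≠ q := by omega
  have hp'le : p' ≤ p := hpmax _ (Finset.mem_erase.2 ⟨hp'q, hp'occ⟩)
  -- p - p' is an occurrence of b in u'
  have hkey : p - p' ∈ occs b u' := by
    rw [hu'drop, occs_drop (by omega)]
    have : p' + (p - p') = p := by omega
    rw [this]; exact hpS
  rcases hbocc _ hkey with h | h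
  · have : p = p' := by omega
    rw [hu'drop, ← this]
  · exfalso; omega
end

section
/- If w is a closed string with |w| ≥ 2 and b = bord(w) is its longest border, then b occurs in w exactly twice, namely as a prefix and as a suffix of w, and these two occurrences are distinct (so |b| < |w|). -/
variable {α : Type*} [DecidableEq α]

theorem stmt14 (w : List α) (hc : IsClosedStr w) (hlen : 2 ≤ w.length) :
    countOcc (bord w) w = 2 := by
  obtain h1 | ⟨b, hbne, ⟨hbnw, hbp, hbs⟩, hb2⟩ := hc
  · omega
  have hble : b.length ≤ w.length := hbp.length_le
  have hblt : b.length < w.length := by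
    rcases lt_or_eq_of_le hble with h | h
    · exact h
    · exact absurd (hbp.eq_of_length h) hbnw
  have hbtake : w.take b.length = b := (List.prefix_iff_eq_take.mp hbp).symm
  set S := (Finset.range w.length).filter (fun k => w.take k <:+ w) with hS
  have h0S : (0 : ℕ) ∈ S := by
    simp only [hS, Finset.mem_filter, Finset.mem_range, List.take_zero]
    exact ⟨by omega, List.nil_suffix⟩
  have hbS : b.length ∈ S := by
    simp only [hS, Finset.mem_filter, Finset.mem_range]
    exact ⟨hblt, by rw [hbtake]; exact hbs⟩
  set K := S.sup id with hK
  have hKS : K ∈ S := by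
    have hne : S.Nonempty := ⟨0, h0S⟩
    have heq : K = S.max' hne := by
      rw [hK, Finset.max'_eq_sup', Finset.sup'_eq_sup]
    rw [heq]
    exact S.max'_mem hne
  have hKlt : K < w.length := (Finset.mem_range.mp (Finset.mem_filter.mp hKS).1)
  have hKsuf : w.take K <:+ w := (Finset.mem_filter.mp hKS).2
  have hbK : b.length ≤ K := Finset.le_sup (f := id) hbS
  set T := (Finset.range (w.length + 1)).filter (fun i => b <+: w.drop i) with hT
  have h0T : (0 : ℕ) ∈ T := by
    simp only [hT, Finset.mem_filter, Finset.mem_range, List.drop_zero]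
    exact ⟨by omega, hbp⟩
  have hdropb : w.drop (w.length - b.length) = b := (List.suffix_iff_eq_drop.mp hbs).symm
  have hmT : w.length - b.length ∈ T := by
    simp only [hT, Finset.mem_filter, Finset.mem_range, hdropb]
    exact ⟨by omega, List.prefix_refl b⟩
  have hTcard : T.card = 2 := hb2
  have hTeq : T = {0, w.length - b.length} := by
    symm
    apply Finset.eq_of_subset_of_card_le
    · intro x hx
      simp only [Finset.mem_insert, Finset.mem_singleton] at hx
      rcases hx with rfl | rfl
      · exact h0T
      · exact hmT
    · rw [hTcard, Finset.card_insert_of_notMem (by simp; omega), Finset.card_singleton]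
  have hbpb : b <+: w.take K := by
    have h : (w.take K).take b.length = b := by
      rw [List.take_take, min_eq_left hbK, hbtake]
    exact h ▸ List.take_prefix _ _
  have hKlen : (w.take K).length = K := by
    rw [List.length_take, min_eq_left (le_of_lt hKlt)]
  have hjT : w.length - K ∈ T := by
    have hdropK : w.drop (w.length - K) = w.take K := by
      have := (List.suffix_iff_eq_drop.mp hKsuf).symm
      rwa [hKlen] at this
    simp only [hT, Finset.mem_filter, Finset.mem_range, hdropK]
    exact ⟨by omega, hbpb⟩
  rw [hTeq] at hjT
  simp only [Finset.mem_insert, Finset.mem_singleton] at hjT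
  have hKb : K = b.length := by omega
  have hbord : bord w = b := by
    rw [bord, ← hS, ← hK, hKb, hbtake]
  rw [hbord]; exact hb2
end

section
/- Let w be a closed string with |w| ≥ 2 and let b = bord(w) be its longest border. If u and u' are strings with longest border b such that b occurs exactly twice in each of u and u', and u, u' are both suffixes of a common string with u, u' having b as a suffix at the same end position, then u = u'. -/
variable {α : Type*} [DecidableEq α]

lemma bord_prefix (w : List α) : bord w <+: w := List.take_prefix _ _

lemma bord_suffix (w : List α) : bord w <:+ w := by
  rcases eq_or_ne w [] with rfl | hw
  · simp [bord]
  · have hne : ((Finset.range w.length).filter (fun k => w.take k <:+ w)).Nonempty := by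
      refine ⟨0, ?_⟩
      simp [Finset.mem_filter, List.length_pos_iff.mpr hw, List.nil_suffix]
    obtain ⟨k, hk, hks⟩ := Finset.exists_mem_eq_sup _ hne id
    rw [bord, hks]
    exact (Finset.mem_filter.mp hk).2

lemma bord_length_lt {w : List α} (hw : w ≠ []) : (bord w).length < w.length := by
  have h : ((Finset.range w.length).filter (fun k => w.take k <:+ w)).sup id < w.length := by
    rw [Finset.sup_lt_iff (by simpa using List.length_pos_iff.mpr hw)]
    intro k hk
    simpa using Finset.mem_range.mp (Finset.mem_filter.mp hk).1
  rw [bord, List.length_take]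
  exact lt_of_le_of_lt (min_le_left _ _) h

lemma bord_longest {c w : List α} (h : IsBorder c w) : c.length ≤ (bord w).length := by
  obtain ⟨hne, hp, hs⟩ := h
  have hlt : c.length < w.length :=
    lt_of_le_of_ne hp.length_le (fun he => hne (hp.eq_of_length he))
  have hmem : c.length ∈ (Finset.range w.length).filter (fun k => w.take k <:+ w) := by
    refine Finset.mem_filter.mpr ⟨Finset.mem_range.mpr hlt, ?_⟩
    rwa [← List.prefix_iff_eq_take.mp hp]
  have hle : c.length ≤ ((Finset.range w.length).filter (fun k => w.take k <:+ w)).sup id :=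
    Finset.le_sup (f := id) hmem
  rw [bord, List.length_take]
  exact le_min hle hlt.le

lemma isBorder_bord {w : List α} (h : bord w ≠ []) : IsBorder (bord w) w := by
  have hw : w ≠ [] := by rintro rfl; exact h (by simp [bord])
  exact ⟨fun he => absurd (congrArg List.length he) (ne_of_lt (bord_length_lt hw)),
    bord_prefix w, bord_suffix w⟩

lemma countOcc_mono {s t w : List α} (h : s <+: t) : countOcc t w ≤ countOcc s w := by
  apply Finset.card_le_card
  intro i hi
  rw [Finset.mem_filter] at hi ⊢
  exact ⟨hi.1, h.trans hi.2⟩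

lemma two_le_countOcc_of_isBorder {b w : List α} (hb : b ≠ []) (h : IsBorder b w) :
    2 ≤ countOcc b w := by
  obtain ⟨hne, hp, hs⟩ := h
  have hlt : b.length < w.length :=
    lt_of_le_of_ne hp.length_le (fun he => hne (hp.eq_of_length he))
  have h0 : 0 ∈ (Finset.range (w.length + 1)).filter (fun i => b <+: w.drop i) := by
    refine Finset.mem_filter.mpr ⟨by simp, by simpa using hp⟩
  have h2 : w.length - b.length ∈
      (Finset.range (w.length + 1)).filter (fun i => b <+: w.drop i) := by
    obtain ⟨t, ht⟩ := hs
    have htl : t.length = w.length - b.length := by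
      have := congrArg List.length ht
      simp at this; omega
    refine Finset.mem_filter.mpr ⟨Finset.mem_range.mpr (by omega), ?_⟩
    rw [← htl, ← ht, List.drop_left]
  have hsub : ({0, w.length - b.length} : Finset ℕ) ⊆
      (Finset.range (w.length + 1)).filter (fun i => b <+: w.drop i) := by
    intro i hi
    rcases Finset.mem_insert.mp hi with rfl | hi
    · exact h0
    · rw [Finset.mem_singleton.mp hi]; exact h2
  have hcard : ({0, w.length - b.length} : Finset ℕ).card = 2 := by
    rw [Finset.card_insert_of_notMem (by simp; omega), Finset.card_singleton]
  calc 2 = ({0, w.length - b.length} : Finset ℕ).card := hcard.symm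
    _ ≤ _ := Finset.card_le_card hsub

lemma countOcc_bord_eq_two {u b : List α} (hc : IsClosedStr u) (hbu : bord u = b)
    (hb : b ≠ []) : countOcc b u = 2 := by
  rcases hc with h1 | ⟨c, hc0, hcb, hc2⟩
  · exfalso
    have hu : u ≠ [] := by intro h; rw [h] at h1; simp at h1
    have := bord_length_lt hu
    rw [hbu, h1] at this
    interval_cases hbl : b.length
    exact hb (List.eq_nil_of_length_eq_zero hbl)
  · have hble : c.length ≤ b.length := by rw [← hbu]; exact bord_longest hcb
    have hbb : IsBorder b u := by rw [← hbu]; exact isBorder_bord (hbu ▸ hb)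
    have hcpb : c <+: b := List.prefix_of_prefix_length_le hcb.2.1 hbb.2.1 hble
    have h1 := countOcc_mono hcpb (w := u)
    have h2 := two_le_countOcc_of_isBorder hb hbb
    omega

lemma main_aux {b u u' : List α} (hb : b ≠ []) (huu' : u <:+ u')
    (hcnt : countOcc b u' = 2) (hbpu : b <+: u) (hblt : b.length < u.length)
    (hbu' : bord u' = b) : u = u' := by
  have hule : u.length ≤ u'.length := List.IsSuffix.length_le huu'
  have hu'ne : u' ≠ [] := by
    intro h
    rw [h] at hule
    simp only [List.length_nil] at hule
    omega
  have hbb : IsBorder b u' := by rw [← hbu']; exact isBorder_bord (hbu' ▸ hb)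
  have hblt' : b.length < u'.length := by rw [← hbu']; exact bord_length_lt hu'ne
  set F := (Finset.range (u'.length + 1)).filter (fun i => b <+: u'.drop i) with hF
  have h0 : 0 ∈ F := Finset.mem_filter.mpr ⟨by simp, by simpa using hbb.2.1⟩
  have h2 : u'.length - b.length ∈ F := by
    obtain ⟨t, ht⟩ := hbb.2.2
    have htl : t.length = u'.length - b.length := by
      have := congrArg List.length ht; simp at this; omega
    refine Finset.mem_filter.mpr ⟨Finset.mem_range.mpr (by omega), ?_⟩
    rw [← htl, ← ht, List.drop_left]
  have hsub : ({0, u'.length - b.length} : Finset ℕ) ⊆ F := by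
    intro i hi
    rcases Finset.mem_insert.mp hi with rfl | hi
    · exact h0
    · rw [Finset.mem_singleton.mp hi]; exact h2
  have hcard : ({0, u'.length - b.length} : Finset ℕ).card = 2 := by
    rw [Finset.card_insert_of_notMem (by simp; omega), Finset.card_singleton]
  have hFc : F.card = 2 := hcnt
  have hFeq : ({0, u'.length - b.length} : Finset ℕ) = F :=
    Finset.eq_of_subset_of_card_le hsub (by rw [hcard, hFc])
  obtain ⟨t, ht⟩ := huu'
  have htl : t.length = u'.length - u.length := by
    have := congrArg List.length ht; simp at this; omega
  have hmem : u'.length - u.length ∈ F := by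
    refine Finset.mem_filter.mpr ⟨Finset.mem_range.mpr (by omega), ?_⟩
    rw [← htl, ← ht, List.drop_left]
    exact hbpu
  rw [← hFeq] at hmem
  rcases Finset.mem_insert.mp hmem with h | h
  · have ht0 : t.length = 0 := by omega
    rw [List.length_eq_zero_iff] at ht0
    rw [ht0, List.nil_append] at ht
    exact ht
  · rw [Finset.mem_singleton] at h
    omega

theorem stmt18 (S b u u' : List α) (hb : b ≠ []) (hbS : b <:+ S)
    (hu : u <:+ S) (hu' : u' <:+ S)
    (hcu : IsClosedStr u) (hcu' : IsClosedStr u')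
    (hbu : bord u = b) (hbu' : bord u' = b) :
    u = u' := by
  have hcnt : countOcc b u = 2 := countOcc_bord_eq_two hcu hbu hb
  have hcnt' : countOcc b u' = 2 := countOcc_bord_eq_two hcu' hbu' hb
  have hune : u ≠ [] := by
    rintro rfl; exact hb (by simpa [bord] using hbu.symm)
  have hu'ne : u' ≠ [] := by
    rintro rfl; exact hb (by simpa [bord] using hbu'.symm)
  have hblt : b.length < u.length := hbu ▸ bord_length_lt hune
  have hblt' : b.length < u'.length := hbu' ▸ bord_length_lt hu'ne
  have hbpu : b <+: u := hbu ▸ bord_prefix u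
  have hbpu' : b <+: u' := hbu' ▸ bord_prefix u'
  rcases le_total u.length u'.length with hle | hle
  · exact main_aux hb (List.suffix_of_suffix_length_le hu hu' hle) hcnt' hbpu hblt hbu'
  · exact (main_aux hb (List.suffix_of_suffix_length_le hu' hu hle) hcnt hbpu' hblt' hbu).symm
end
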